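/- arXiv:2109.14358 — 3 statements merged into one kernel-verified Lean document; each statement's English description precedes it below -/
import Mathlib

section
/- Under the DFRLP flow constraints, i(k,l) = 1 holds if and only if k < l, (k = 0 or x(k) = 1), (l = n+1 or x(l) = 1), and x(j) = 0 for every j with k < j < l. That is, the used cycle segments are exactly the consecutive pairs in the sequence consisting of the origin, the opened stations in their order along the flow, and the destination; in particular i is uniquely determined by x. -/
/-!
Cut every flow at the gap between `ℓ_m` and `ℓ_{m+1}`. Conservation at the stations makes the
flow across each such cut equal to the flow `1` leaving the origin, so (all `i` being
nonnegative) at most one used segment crosses each cut. A used segment `(k, l)` therefore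
starts and ends at an opened station or at an endpoint (the flow through a station lies between
`i(k,l) = 1` and the cut flow `1`), and no opened station `j` lies strictly
between `k` and `l`, since the segment entering `j` and `(k, l)` would both cross the cut just
before `j`. Conversely the unit flow leaving `k` uses some segment `(k, l')`, which must be
`(k, l)` by the same characterization.
-/

open Finset

lemma exists_eq_one_of_sum_eq_one {ι M : Type*} [AddCommMonoidWithOne M] [NeZero (1 : M)]
    {s : Finset ι} {f : ι → M} (hf : ∀ a ∈ s, f a = 0 ∨ f a = 1) (h : ∑ a ∈ s, f a = 1) :
    ∃ a ∈ s, f a = 1 := by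
  obtain ⟨a, ha, hne⟩ := exists_ne_zero_of_sum_ne_zero (h ▸ one_ne_zero)
  exact ⟨a, ha, (hf a ha).resolve_left hne⟩

def cutFlow (n : ℕ) (i : ℕ → ℕ → ℝ) (m : ℕ) : ℝ :=
  ∑ a ∈ range (m + 1), ∑ b ∈ Icc (m + 1) (n + 1), i a b

def IsConsecutive (n : ℕ) (x : ℕ → ℝ) (k l : ℕ) : Prop :=
  (k = 0 ∨ x k = 1) ∧ (l = n + 1 ∨ x l = 1) ∧ ∀ j, k < j → j < l → x j = 0

section

variable {n : ℕ} {x : ℕ → ℝ} {i : ℕ → ℕ → ℝ}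

lemma cutFlow_zero : cutFlow n i 0 = ∑ b ∈ Icc 1 (n + 1), i 0 b := by
  simp [cutFlow]

lemma cutFlow_succ {m : ℕ} (hm : m ≤ n) :
    cutFlow n i (m + 1) = cutFlow n i m - ∑ a ∈ range (m + 1), i a (m + 1)
      + ∑ b ∈ Icc (m + 1 + 1) (n + 1), i (m + 1) b := by
  have split_first (a : ℕ) : ∑ b ∈ Icc (m + 1) (n + 1), i a b
      = i a (m + 1) + ∑ b ∈ Icc (m + 1 + 1) (n + 1), i a b := by
    rw [← add_sum_Ioc_eq_sum_Icc (by omega), Icc_add_one_left_eq_Ioc]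
  simp only [cutFlow, sum_range_succ _ (m + 1), split_first, sum_add_distrib]
  ring

lemma cutFlow_eq_one
    (hout : ∀ k, 1 ≤ k → k ≤ n → ∑ l ∈ Icc (k + 1) (n + 1), i k l = x k)
    (hin : ∀ k, 1 ≤ k → k ≤ n → ∑ j ∈ range k, i j k = x k)
    (horig : ∑ l ∈ Icc 1 (n + 1), i 0 l = 1) :
    ∀ m ≤ n, cutFlow n i m = 1
  | 0, _ => by rw [cutFlow_zero, horig]
  | m + 1, hm => by
    rw [cutFlow_succ (by omega), cutFlow_eq_one hout hin horig m (by omega),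
      hin (m + 1) (by omega) hm, hout (m + 1) (by omega) hm]
    ring

lemma outflow_le_cutFlow (hnn : ∀ a b, a < b → b ≤ n + 1 → 0 ≤ i a b) (k : ℕ) :
    ∑ b ∈ Icc (k + 1) (n + 1), i k b ≤ cutFlow n i k := by
  refine single_le_sum (f := fun a ↦ ∑ b ∈ Icc (k + 1) (n + 1), i a b)
    (fun a ha ↦ sum_nonneg fun b hb ↦ ?_) (self_mem_range_succ k)
  simp only [mem_range, mem_Icc] at ha hb
  exact hnn a b (by omega) hb.2

lemma segment_add_inflow_le_cutFlow (hnn : ∀ a b, a < b → b ≤ n + 1 → 0 ≤ i a b)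
    {k l m : ℕ} (hkm : k ≤ m) (hml : m + 1 < l) (hl : l ≤ n + 1) :
    i k l + ∑ a ∈ range (m + 1), i a (m + 1) ≤ cutFlow n i m := by
  have hcol : ∀ b ∈ Icc (m + 1) (n + 1), 0 ≤ ∑ a ∈ range (m + 1), i a b := fun b hb ↦
    sum_nonneg fun a ha ↦ by
      simp only [mem_range, mem_Icc] at ha hb
      exact hnn a b (by omega) hb.2
  calc i k l + ∑ a ∈ range (m + 1), i a (m + 1)
      ≤ ∑ a ∈ range (m + 1), i a l + ∑ a ∈ range (m + 1), i a (m + 1) := by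
        gcongr
        exact single_le_sum (fun a ha ↦ hnn a l (by simp at ha; omega) hl) (by simp; omega)
    _ ≤ ∑ b ∈ Icc (m + 1) (n + 1), ∑ a ∈ range (m + 1), i a b :=
        add_le_sum hcol (by simp; omega) (by simp; omega) (by omega)
    _ = cutFlow n i m := sum_comm

lemma station_le_one (hnn : ∀ a b, a < b → b ≤ n + 1 → 0 ≤ i a b)
    (hout : ∀ k, 1 ≤ k → k ≤ n → ∑ l ∈ Icc (k + 1) (n + 1), i k l = x k)
    (hcut : ∀ m ≤ n, cutFlow n i m = 1) {k : ℕ} (hk : 1 ≤ k) (hkn : k ≤ n) : x k ≤ 1 := by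
  simpa only [hout k hk hkn, hcut k hkn] using outflow_le_cutFlow hnn k

lemma IsConsecutive.not_lt {k l l' : ℕ} (h : IsConsecutive n x k l)
    (h' : IsConsecutive n x k l') (hkl : k < l) (hl' : l' ≤ n + 1) : ¬ l < l' := fun hll' ↦ by
  have hxl : x l = 1 := h.2.1.resolve_left (by omega)
  simp [h'.2.2 l hkl hll'] at hxl

lemma IsConsecutive.right_unique {k l l' : ℕ} (h : IsConsecutive n x k l)
    (h' : IsConsecutive n x k l') (hkl : k < l) (hkl' : k < l') (hl : l ≤ n + 1)
    (hl' : l' ≤ n + 1) : l = l' :=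
  le_antisymm (_root_.not_lt.1 (h'.not_lt h hkl' hl)) (_root_.not_lt.1 (h.not_lt h' hkl hl'))

lemma isConsecutive_of_eq_one (hnn : ∀ a b, a < b → b ≤ n + 1 → 0 ≤ i a b)
    (hout : ∀ k, 1 ≤ k → k ≤ n → ∑ l ∈ Icc (k + 1) (n + 1), i k l = x k)
    (hin : ∀ k, 1 ≤ k → k ≤ n → ∑ j ∈ range k, i j k = x k)
    (hcut : ∀ m ≤ n, cutFlow n i m = 1) {k l : ℕ} (hkl : k < l) (hl : l ≤ n + 1)
    (h : i k l = 1) : IsConsecutive n x k l := by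
  refine ⟨?_, ?_, fun j hkj hjl ↦ ?_⟩
  · refine or_iff_not_imp_left.2 fun hk ↦ le_antisymm
      (station_le_one hnn hout hcut (by omega) (by omega)) ?_
    rw [← h, ← hout k (by omega) (by omega)]
    exact single_le_sum (fun b hb ↦ hnn k b (by simp at hb; omega) (by simp at hb; omega))
      (by simp; omega)
  · refine or_iff_not_imp_left.2 fun hl' ↦ le_antisymm
      (station_le_one hnn hout hcut (by omega) (by omega)) ?_
    rw [← h, ← hin l (by omega) (by omega)]
    exact single_le_sum (fun a ha ↦ hnn a l (by simp at ha; omega) hl) (by simp; omega)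
  · obtain ⟨m, rfl⟩ : ∃ m, j = m + 1 := ⟨j - 1, by omega⟩
    have hcross := segment_add_inflow_le_cutFlow hnn (by omega : k ≤ m) hjl hl
    rw [h, hin (m + 1) (by omega) (by omega), hcut m (by omega)] at hcross
    have hxj : 0 ≤ x (m + 1) := hin (m + 1) (by omega) (by omega) ▸
      sum_nonneg fun a ha ↦ hnn a (m + 1) (by simpa using ha) (by omega)
    linarith

lemma exists_used_segment_from (hi : ∀ k l, k < l → l ≤ n + 1 → (i k l = 0 ∨ i k l = 1))
    (hout : ∀ k, 1 ≤ k → k ≤ n → ∑ l ∈ Icc (k + 1) (n + 1), i k l = x k)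
    (horig : ∑ l ∈ Icc 1 (n + 1), i 0 l = 1) {k : ℕ} (hkn : k ≤ n) (hk : k = 0 ∨ x k = 1) :
    ∃ l, k < l ∧ l ≤ n + 1 ∧ i k l = 1 := by
  have hsum : ∑ l ∈ Icc (k + 1) (n + 1), i k l = 1 := by
    rcases Nat.eq_zero_or_pos k with rfl | hpos
    · exact horig
    · rw [hout k hpos hkn, hk.resolve_left hpos.ne']
  obtain ⟨l, hl, h⟩ := exists_eq_one_of_sum_eq_one
    (fun l hl ↦ hi k l (by simp at hl; omega) (by simp at hl; omega)) hsum
  simp only [mem_Icc] at hl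
  exact ⟨l, by omega, hl.2, h⟩

end

theorem dfrlp_segments_are_consecutive_pairs_general (n : ℕ) (x : ℕ → ℝ) (i : ℕ → ℕ → ℝ)
    (hi : ∀ k l, k < l → l ≤ n + 1 → (i k l = 0 ∨ i k l = 1))
    (hout : ∀ k, 1 ≤ k → k ≤ n → ∑ l ∈ Finset.Icc (k + 1) (n + 1), i k l = x k)
    (hin : ∀ k, 1 ≤ k → k ≤ n → ∑ j ∈ Finset.range k, i j k = x k)
    (horig : ∑ l ∈ Finset.Icc 1 (n + 1), i 0 l = 1) :
    ∀ k l, k < l → l ≤ n + 1 →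
      (i k l = 1 ↔
        (k = 0 ∨ x k = 1) ∧ (l = n + 1 ∨ x l = 1) ∧
          ∀ j, k < j → j < l → x j = 0) := by
  have hnn : ∀ a b, a < b → b ≤ n + 1 → 0 ≤ i a b := fun a b hab hb ↦ by
    rcases hi a b hab hb with h | h <;> simp [h]
  have hcut := cutFlow_eq_one hout hin horig
  intro k l hkl hl
  refine ⟨isConsecutive_of_eq_one hnn hout hin hcut hkl hl,
    fun (hcons : IsConsecutive n x k l) ↦ ?_⟩
  obtain ⟨l', hkl', hl', h⟩ := exists_used_segment_from hi hout horig (by omega) hcons.1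
  have hcons' := isConsecutive_of_eq_one hnn hout hin hcut hkl' hl' h
  rwa [hcons.right_unique hcons' hkl hkl' hl hl']

/-- Under the DFRLP flow constraints (locations `ℓ_0 = O_f, ℓ_1, …, ℓ_n, ℓ_{n+1} = D_f`,
binary station variables `x k` for `k = 1,…,n`, binary segment variables `i k l` for
`0 ≤ k < l ≤ n+1`), `i k l = 1` holds if and only if `(k = 0 ∨ x k = 1)`,
`(l = n+1 ∨ x l = 1)` and `x j = 0` for every `j` with `k < j < l`: the used cycle
segments are exactly the consecutive pairs of the sequence
origin – opened stations – destination. -/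
theorem dfrlp_segments_are_consecutive_pairs (n : ℕ) (x : ℕ → ℝ) (i : ℕ → ℕ → ℝ)
    (hx : ∀ k, 1 ≤ k → k ≤ n → (x k = 0 ∨ x k = 1))
    (hi : ∀ k l, k < l → l ≤ n + 1 → (i k l = 0 ∨ i k l = 1))
    (hout : ∀ k, 1 ≤ k → k ≤ n → ∑ l ∈ Finset.Icc (k + 1) (n + 1), i k l = x k)
    (hin : ∀ k, 1 ≤ k → k ≤ n → ∑ j ∈ Finset.range k, i j k = x k)
    (horig : ∑ l ∈ Finset.Icc 1 (n + 1), i 0 l = 1)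
    (hdest : ∑ k ∈ Finset.range (n + 1), i k (n + 1) = 1) :
    ∀ k l, k < l → l ≤ n + 1 →
      (i k l = 1 ↔
        (k = 0 ∨ x k = 1) ∧ (l = n + 1 ∨ x l = 1) ∧
          ∀ j, k < j → j < l → x j = 0) :=
  dfrlp_segments_are_consecutive_pairs_general n x i hi hout hin horig
end

section
/- Assume the DFRLP flow constraints hold and let t(k,l) ≥ 0 be the cycle-segment distances and R > 0 the driving range. Then the driving-range constraints ∑_{l=k+1}^{n+1} i(k,l)·t(k,l) ≤ R for every k ∈ {0,1,…,n} are satisfied if and only if t(k,l) ≤ R for every consecutive pair (k,l) of the sequence origin–opened stations–destination, i.e., for every pair (k,l) with k < l, (k = 0 or x(k) = 1), (l = n+1 or x(l) = 1), and x(j) = 0 for all k < j < l. Hence a flow can be covered (y_f = 1) exactly when the distance of each cycle segment between consecutively opened locations along its path does not exceed the driving range. -/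
/-!
The origin emits one unit of flow and every intermediate location passes on what it receives,
so exactly one unit crosses every cut between `ℓ_p` and `ℓ_{p+1}`; as entries are `0`/`1`,
exactly one used segment spans it. Hence the used segments are precisely the consecutive pairs
of the path origin – opened stations – destination, and every `ℓ_k` on that path has a single
outgoing segment, whose length is all that the `k`-th driving-range constraint measures.
-/

open Finset

section ZeroOne

variable {ι R : Type*} {s : Finset ι} {f : ι → R} {a b : ι}

theorem exists_eq_one_of_sum_ne_zero [Semiring R] (hf : ∀ a ∈ s, f a = 0 ∨ f a = 1)
    (h : ∑ a ∈ s, f a ≠ 0) : ∃ a ∈ s, f a = 1 := by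
  obtain ⟨a, ha, hfa⟩ := exists_ne_zero_of_sum_ne_zero h
  exact ⟨a, ha, (hf a ha).resolve_left hfa⟩

theorem sum_mul_eq_of_eq_one [Semiring R] (hf : ∀ a ∈ s, f a = 0 ∨ f a = 1)
    (huniq : ∀ b ∈ s, f b = 1 → b = a) (ha : a ∈ s) (hfa : f a = 1) (g : ι → R) :
    ∑ b ∈ s, f b * g b = g a := by
  rw [sum_eq_single_of_mem a ha fun b hb hba => ?_, hfa, one_mul]
  rw [(hf b hb).resolve_right (hba ∘ huniq b hb), zero_mul]

theorem eq_of_eq_one_of_sum_le_one [Semiring R] [PartialOrder R] [IsStrictOrderedRing R]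
    (hf : ∀ a ∈ s, 0 ≤ f a) (h : ∑ a ∈ s, f a ≤ 1) (ha : a ∈ s) (hb : b ∈ s)
    (hfa : f a = 1) (hfb : f b = 1) : a = b := by
  by_contra hab
  have h2 := (add_le_sum hf ha hb hab).trans h
  rw [hfa, hfb, one_add_one_eq_two] at h2
  exact one_lt_two.not_ge h2

end ZeroOne

structure IsDFRLPFlow (n : ℕ) (x : ℕ → ℝ) (i : ℕ → ℕ → ℝ) : Prop where
  zero_or_one : ∀ k l, k < l → l ≤ n + 1 → i k l = 0 ∨ i k l = 1
  sum_out : ∀ k, 1 ≤ k → k ≤ n → ∑ l ∈ Icc (k + 1) (n + 1), i k l = x k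
  sum_in : ∀ k, 1 ≤ k → k ≤ n → ∑ j ∈ range k, i j k = x k
  sum_origin : ∑ l ∈ Icc 1 (n + 1), i 0 l = 1

def IsConsecutiveStops (n : ℕ) (x : ℕ → ℝ) (k l : ℕ) : Prop :=
  (k = 0 ∨ x k = 1) ∧ (l = n + 1 ∨ x l = 1) ∧ ∀ j, k < j → j < l → x j = 0

def cutSegments (n p : ℕ) : Finset (ℕ × ℕ) :=
  range (p + 1) ×ˢ Icc (p + 1) (n + 1)

theorem mem_cutSegments {n p k l : ℕ} :
    (k, l) ∈ cutSegments n p ↔ k ≤ p ∧ p < l ∧ l ≤ n + 1 := by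
  simp only [cutSegments, mem_product, mem_range, mem_Icc]
  omega

namespace IsDFRLPFlow

variable {n : ℕ} {x : ℕ → ℝ} {i : ℕ → ℕ → ℝ}

theorem sum_cutSegments (hf : IsDFRLPFlow n x i) {p : ℕ} (hp : p ≤ n) :
    ∑ a ∈ cutSegments n p, i a.1 a.2 = 1 := by
  rw [cutSegments, sum_product]
  induction p with
  | zero => simpa using hf.sum_origin
  | succ q ih =>
    have hsplit : ∀ k, ∑ l ∈ Icc (q + 1) (n + 1), i k l
        = i k (q + 1) + ∑ l ∈ Icc (q + 1 + 1) (n + 1), i k l := fun k => by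
      rw [← add_sum_Ioc_eq_sum_Icc (by omega), ← Icc_add_one_left_eq_Ioc]
    -- Moving the cut past `ℓ_{q+1}` drops its inflow and adds its outflow, both `x (q + 1)`.
    have hprev := ih (by omega)
    simp only [hsplit, sum_add_distrib, hf.sum_in (q + 1) (by omega) hp] at hprev
    rw [sum_range_succ, hf.sum_out (q + 1) (by omega) hp]
    linarith

theorem zero_or_one_of_mem_cutSegments (hf : IsDFRLPFlow n x i) {p : ℕ} {s : ℕ × ℕ}
    (hs : s ∈ cutSegments n p) : i s.1 s.2 = 0 ∨ i s.1 s.2 = 1 := by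
  have := mem_cutSegments.1 hs
  exact hf.zero_or_one s.1 s.2 (by omega) (by omega)

theorem exists_mem_cutSegments (hf : IsDFRLPFlow n x i) {p : ℕ} (hp : p ≤ n) :
    ∃ s ∈ cutSegments n p, i s.1 s.2 = 1 :=
  exists_eq_one_of_sum_ne_zero (fun _ => hf.zero_or_one_of_mem_cutSegments)
    ((hf.sum_cutSegments hp).symm ▸ one_ne_zero)

theorem eq_of_mem_cutSegments (hf : IsDFRLPFlow n x i) {p a b c d : ℕ} (hp : p ≤ n)
    (hab : (a, b) ∈ cutSegments n p) (hcd : (c, d) ∈ cutSegments n p)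
    (habi : i a b = 1) (hcdi : i c d = 1) : a = c ∧ b = d := by
  have hnonneg : ∀ s ∈ cutSegments n p, 0 ≤ i s.1 s.2 := fun s hs => by
    rcases hf.zero_or_one_of_mem_cutSegments hs with h | h <;> simp [h]
  exact Prod.ext_iff.1 <| eq_of_eq_one_of_sum_le_one hnonneg (hf.sum_cutSegments hp).le
    hab hcd habi hcdi

theorem sum_out_mul (hf : IsDFRLPFlow n x i) {k l : ℕ} (hkl : k < l) (hl : l ≤ n + 1)
    (hi : i k l = 1) (g : ℕ → ℝ) :
    ∑ l' ∈ Icc (k + 1) (n + 1), i k l' * g l' = g l := by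
  refine sum_mul_eq_of_eq_one (fun l' hl' => ?_) (fun l' hl' hi' => ?_)
    (mem_Icc.2 ⟨hkl, hl⟩) hi g
  all_goals have := mem_Icc.1 hl'
  · exact hf.zero_or_one k l' (by omega) (by omega)
  · exact (hf.eq_of_mem_cutSegments (p := k) (by omega) (mem_cutSegments.2 (by omega))
      (mem_cutSegments.2 (by omega)) hi' hi).2

theorem sum_out_mul_eq_zero (hf : IsDFRLPFlow n x i) {k : ℕ}
    (h : ∀ l, k < l → l ≤ n + 1 → i k l ≠ 1) (g : ℕ → ℝ) :
    ∑ l ∈ Icc (k + 1) (n + 1), i k l * g l = 0 := by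
  refine sum_eq_zero fun l hl => ?_
  have := mem_Icc.1 hl
  rw [(hf.zero_or_one k l (by omega) (by omega)).resolve_right (h l (by omega) (by omega)),
    zero_mul]

theorem sum_in_mul (hf : IsDFRLPFlow n x i) {k l : ℕ} (hkl : k < l) (hl : l ≤ n + 1)
    (hi : i k l = 1) (g : ℕ → ℝ) :
    ∑ j ∈ range l, i j l * g j = g k := by
  refine sum_mul_eq_of_eq_one (fun j hj => ?_) (fun j hj hi' => ?_) (mem_range.2 hkl) hi g
  all_goals have := mem_range.1 hj
  · exact hf.zero_or_one j l this hl
  · exact (hf.eq_of_mem_cutSegments (p := l - 1) (by omega) (mem_cutSegments.2 (by omega))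
      (mem_cutSegments.2 (by omega)) hi' hi).1

theorem eq_one_of_outgoing (hf : IsDFRLPFlow n x i) {k l : ℕ} (hk : 1 ≤ k) (hkl : k < l)
    (hl : l ≤ n + 1) (hi : i k l = 1) : x k = 1 := by
  simpa [hf.sum_out k hk (by omega)] using hf.sum_out_mul hkl hl hi 1

theorem eq_one_of_incoming (hf : IsDFRLPFlow n x i) {k l : ℕ} (hkl : k < l) (hl : l ≤ n)
    (hi : i k l = 1) : x l = 1 := by
  simpa [hf.sum_in l (by omega) hl] using hf.sum_in_mul hkl (by omega) hi 1

theorem exists_outgoing_of_ne_zero (hf : IsDFRLPFlow n x i) {k : ℕ} (hk : 1 ≤ k) (hkn : k ≤ n)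
    (hx : x k ≠ 0) : ∃ l, k < l ∧ l ≤ n + 1 ∧ i k l = 1 := by
  rw [← hf.sum_out k hk hkn] at hx
  obtain ⟨l, hl, hi⟩ := exists_eq_one_of_sum_ne_zero (fun l hl => by
    have := mem_Icc.1 hl
    exact hf.zero_or_one k l (by omega) (by omega)) hx
  have := mem_Icc.1 hl
  exact ⟨l, by omega, this.2, hi⟩

theorem exists_incoming_of_ne_zero (hf : IsDFRLPFlow n x i) {l : ℕ} (hl : 1 ≤ l) (hln : l ≤ n)
    (hx : x l ≠ 0) : ∃ k < l, i k l = 1 := by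
  rw [← hf.sum_in l hl hln] at hx
  obtain ⟨k, hk, hi⟩ := exists_eq_one_of_sum_ne_zero (fun k hk =>
    hf.zero_or_one k l (mem_range.1 hk) (by omega)) hx
  exact ⟨k, mem_range.1 hk, hi⟩

theorem isConsecutiveStops_of_eq_one (hf : IsDFRLPFlow n x i) {k l : ℕ} (hkl : k < l)
    (hl : l ≤ n + 1) (hi : i k l = 1) : IsConsecutiveStops n x k l := by
  refine ⟨?_, ?_, fun j hkj hjl => ?_⟩
  · rcases Nat.eq_zero_or_pos k with hk | hk
    · exact .inl hk
    · exact .inr (hf.eq_one_of_outgoing hk hkl hl hi)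
  · rcases hl.eq_or_lt with hl | hl
    · exact .inl hl
    · exact .inr (hf.eq_one_of_incoming hkl (by omega) hi)
  · by_contra hxj
    obtain ⟨b, hjb, hb, hjbi⟩ := hf.exists_outgoing_of_ne_zero (by omega) (by omega) hxj
    have := (hf.eq_of_mem_cutSegments (p := j) (by omega) (mem_cutSegments.2 (by omega))
      (mem_cutSegments.2 (by omega)) hi hjbi).1
    omega

theorem eq_one_of_isConsecutiveStops (hf : IsDFRLPFlow n x i) {k l : ℕ} (hkl : k < l)
    (hl : l ≤ n + 1) (hcons : IsConsecutiveStops n x k l) : i k l = 1 := by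
  obtain ⟨hk, hl', hmid⟩ := hcons
  -- The segment crossing the cut after `ℓ_k` leaves `ℓ_k`, and ends neither before `ℓ_l`
  -- (it would end at an opened station) nor after it (`ℓ_l` already receives one).
  obtain ⟨⟨a, b⟩, hab, habi⟩ := hf.exists_mem_cutSegments (p := k) (by omega)
  obtain ⟨hak, hkb, hb⟩ := mem_cutSegments.1 hab
  obtain rfl : a = k := by
    rcases Nat.eq_zero_or_pos k with rfl | hkpos
    · omega
    obtain ⟨b', hkb', hb', hkb'i⟩ := hf.exists_outgoing_of_ne_zero hkpos (by omega)
      (by simp [hk.resolve_left (by omega)])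
    exact (hf.eq_of_mem_cutSegments (by omega) hab (mem_cutSegments.2 (by omega)) habi
      hkb'i).1
  rcases lt_trichotomy b l with hbl | rfl | hlb
  · have := hmid b hkb hbl
    rw [hf.eq_one_of_incoming hkb (by omega) habi] at this
    exact absurd this one_ne_zero
  · exact habi
  · obtain ⟨m, hml, hmli⟩ := hf.exists_incoming_of_ne_zero (l := l) (by omega) (by omega)
      (by simp [hl'.resolve_left (by omega)])
    have := (hf.eq_of_mem_cutSegments (p := l - 1) (by omega) (mem_cutSegments.2 (by omega))
      (mem_cutSegments.2 (by omega)) habi hmli).2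
    omega

theorem eq_one_iff_isConsecutiveStops (hf : IsDFRLPFlow n x i) {k l : ℕ} (hkl : k < l)
    (hl : l ≤ n + 1) : i k l = 1 ↔ IsConsecutiveStops n x k l :=
  ⟨hf.isConsecutiveStops_of_eq_one hkl hl, hf.eq_one_of_isConsecutiveStops hkl hl⟩

end IsDFRLPFlow

theorem dfrlp_range_constraints_iff_general (n : ℕ) (x : ℕ → ℝ) (i : ℕ → ℕ → ℝ)
    (t : ℕ → ℕ → ℝ) (R : ℝ)
    (hi : ∀ k l, k < l → l ≤ n + 1 → (i k l = 0 ∨ i k l = 1))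
    (hout : ∀ k, 1 ≤ k → k ≤ n → ∑ l ∈ Finset.Icc (k + 1) (n + 1), i k l = x k)
    (hin : ∀ k, 1 ≤ k → k ≤ n → ∑ j ∈ Finset.range k, i j k = x k)
    (horig : ∑ l ∈ Finset.Icc 1 (n + 1), i 0 l = 1)
    (hR : 0 < R) :
    (∀ k, k ≤ n → ∑ l ∈ Finset.Icc (k + 1) (n + 1), i k l * t k l ≤ R) ↔
      (∀ k l, k < l → l ≤ n + 1 →
        ((k = 0 ∨ x k = 1) ∧ (l = n + 1 ∨ x l = 1) ∧
          (∀ j, k < j → j < l → x j = 0)) → t k l ≤ R) := by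
  have hf : IsDFRLPFlow n x i := ⟨hi, hout, hin, horig⟩
  constructor
  · intro hrange k l hkl hl hcons
    have hikl := (hf.eq_one_iff_isConsecutiveStops hkl hl).2 hcons
    simpa only [hf.sum_out_mul hkl hl hikl] using hrange k (by omega)
  · intro hcons k hk
    by_cases h : ∃ l, k < l ∧ l ≤ n + 1 ∧ i k l = 1
    · obtain ⟨l, hkl, hl, hikl⟩ := h
      rw [hf.sum_out_mul hkl hl hikl]
      exact hcons k l hkl hl ((hf.eq_one_iff_isConsecutiveStops hkl hl).1 hikl)
    · push Not at h
      rw [hf.sum_out_mul_eq_zero h]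
      exact hR.le

/-- Under the DFRLP flow constraints, with cycle-segment distances `t k l ≥ 0` and
driving range `R > 0`, the driving-range constraints
`∑_{l=k+1}^{n+1} i k l * t k l ≤ R` for every `k ∈ {0,…,n}` hold if and only if
`t k l ≤ R` for every consecutive pair `(k,l)` of the sequence
origin – opened stations – destination. -/
theorem dfrlp_range_constraints_iff (n : ℕ) (x : ℕ → ℝ) (i : ℕ → ℕ → ℝ)
    (t : ℕ → ℕ → ℝ) (R : ℝ)
    (hx : ∀ k, 1 ≤ k → k ≤ n → (x k = 0 ∨ x k = 1))
    (hi : ∀ k l, k < l → l ≤ n + 1 → (i k l = 0 ∨ i k l = 1))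
    (hout : ∀ k, 1 ≤ k → k ≤ n → ∑ l ∈ Finset.Icc (k + 1) (n + 1), i k l = x k)
    (hin : ∀ k, 1 ≤ k → k ≤ n → ∑ j ∈ Finset.range k, i j k = x k)
    (horig : ∑ l ∈ Finset.Icc 1 (n + 1), i 0 l = 1)
    (hdest : ∑ k ∈ Finset.range (n + 1), i k (n + 1) = 1)
    (ht : ∀ k l, 0 ≤ t k l) (hR : 0 < R) :
    (∀ k, k ≤ n → ∑ l ∈ Finset.Icc (k + 1) (n + 1), i k l * t k l ≤ R) ↔
      (∀ k l, k < l → l ≤ n + 1 →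
        ((k = 0 ∨ x k = 1) ∧ (l = n + 1 ∨ x l = 1) ∧
          (∀ j, k < j → j < l → x j = 0)) → t k l ≤ R) :=
  dfrlp_range_constraints_iff_general n x i t R hi hout hin horig hR
end

section
/- Consider finitely many flows f, each covered by consecutive stations chosen from a finite set K of locations, where flow f has one-way path length T_f > 0, volume v_f > 0, refuelling frequency e_f ∈ (0,1] and covered proportion z_f ∈ [0,1], and let n_k ∈ ℕ be the number of charging poles installed at location k, each pole of capacity Cap > 0. If at every location k the capacity constraint holds — the sum over all flows stopping at k of their energy-demand term (incoming plus outgoing cycle-segment distance times v_f·e_f·z_f) is at most Cap·n_k — then ∑_f 2T_f·v_f·e_f·z_f ≤ Cap·∑_{k∈K} n_k. Consequently, with a limited total number S of charging poles the achievable flow volume covered is bounded, and full coverage of the total flow volume may be impossible no matter where the poles are placed. -/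
/-!
Each flow's demand terms telescope: along the stations `s 1 < … < s m` of a flow of length `T`,
the incoming and outgoing cycle segments add up to `2 * s 1 + (s m - s 1)` and
`(s m - s 1) + 2 * (T - s m)`, i.e. to the round-trip length `2 * T`. Since every station lies in
`K`, summing the capacity constraints over `K` counts each station of each flow exactly once, so the
left-hand sides add up to `∑ f, 2 * T f * (v f * e f * z f)`.
-/

open Finset

-- The end segments are doubled: the cycle segment around `O` (resp. `D`) is driven out and back.
def incomingSegment (s : ℕ → ℝ) (j : ℕ) : ℝ :=
  if j = 1 then 2 * s 1 else s j - s (j - 1)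

def outgoingSegment (s : ℕ → ℝ) (T : ℝ) (m j : ℕ) : ℝ :=
  if j = m then 2 * (T - s m) else s (j + 1) - s j

theorem sum_incomingSegment (s : ℕ → ℝ) {m : ℕ} (hm : 1 ≤ m) :
    ∑ j ∈ Icc 1 m, incomingSegment s j = s m + s 1 := by
  induction m, hm using Nat.le_induction with
  | base => rw [Icc_self, sum_singleton, incomingSegment, if_pos rfl]; ring
  | succ m hm ih =>
    rw [sum_Icc_succ_top (by omega), ih, incomingSegment, if_neg (by omega), Nat.add_sub_cancel]
    ring

theorem sum_outgoingSegment (s : ℕ → ℝ) (T : ℝ) {m : ℕ} (hm : 1 ≤ m) :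
    ∑ j ∈ Icc 1 m, outgoingSegment s T m j = s m - s 1 + 2 * (T - s m) := by
  rw [← Ico_insert_right hm, sum_insert right_notMem_Ico, outgoingSegment, if_pos rfl, add_comm,
    ← sum_Ico_sub s hm]
  refine congrArg (· + _) (sum_congr rfl fun j hj => ?_)
  rw [outgoingSegment, if_neg (mem_Ico.mp hj).2.ne]

theorem sum_incomingSegment_add_outgoingSegment (s : ℕ → ℝ) (T : ℝ) {m : ℕ} (hm : 1 ≤ m) :
    ∑ j ∈ Icc 1 m, (incomingSegment s j + outgoingSegment s T m j) = 2 * T := by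
  rw [sum_add_distrib, sum_incomingSegment s hm, sum_outgoingSegment s T hm]
  ring

theorem Finset.sum_sum_ite_eq_of_mapsTo {ι α M : Type*} [DecidableEq α] [AddCommMonoid M]
    {I : Finset ι} {K : Finset α} {loc : ι → α} (h : ∀ i ∈ I, loc i ∈ K) (a : ι → M) :
    ∑ k ∈ K, ∑ i ∈ I, (if loc i = k then a i else 0) = ∑ i ∈ I, a i := by
  simpa only [sum_filter] using sum_fiberwise_of_maps_to h a

theorem aggregate_capacity_bound_general {F α : Type*} [Fintype F] [DecidableEq α]
    (K : Finset α) (Cap : ℝ)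
    (T v e z : F → ℝ) (m : F → ℕ) (s : F → ℕ → ℝ) (loc : F → ℕ → α) (n : α → ℕ)
    (hm : ∀ f, 1 ≤ m f)
    (hloc : ∀ f j, 1 ≤ j → j ≤ m f → loc f j ∈ K)
    (hcapacity : ∀ k ∈ K,
      ∑ f, ∑ j ∈ Finset.Icc 1 (m f),
        (if loc f j = k then
          ((if j = 1 then 2 * s f 1 else s f j - s f (j - 1)) +
           (if j = m f then 2 * (T f - s f (m f)) else s f (j + 1) - s f j)) *
            (v f * e f * z f)
        else 0) ≤ Cap * (n k : ℝ)) :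
    ∑ f, 2 * T f * (v f * e f * z f) ≤ Cap * ∑ k ∈ K, (n k : ℝ) := by
  calc ∑ f, 2 * T f * (v f * e f * z f)
      = ∑ k ∈ K, ∑ f, ∑ j ∈ Icc 1 (m f), (if loc f j = k then
          (incomingSegment (s f) j + outgoingSegment (s f) (T f) (m f) j) * (v f * e f * z f)
          else 0) := by
        rw [sum_comm]
        refine sum_congr rfl fun f _ => ?_
        rw [sum_sum_ite_eq_of_mapsTo fun j hj => hloc f j (mem_Icc.mp hj).1 (mem_Icc.mp hj).2,
          ← sum_mul, sum_incomingSegment_add_outgoingSegment _ _ (hm f)]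
    _ ≤ ∑ k ∈ K, Cap * (n k : ℝ) := sum_le_sum hcapacity
    _ = Cap * ∑ k ∈ K, (n k : ℝ) := (mul_sum _ _ _).symm

/-- C-DFRLP aggregate capacity bound: if every flow `f` (one-way length `T f`,
volume `v f`, refuelling frequency `e f`, covered proportion `z f`) is covered
by consecutive stations located (via `loc`) at points of a finite set `K`, and
at every location `k ∈ K` the capacity constraint holds (the sum of the
energy-demand terms of the flows stopping at `k` is at most `Cap · n k`), then
`∑ f, 2·T f·v f·e f·z f ≤ Cap · ∑ k ∈ K, n k`. -/
theorem aggregate_capacity_bound {F α : Type*} [Fintype F] [DecidableEq α]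
    (K : Finset α) (R Cap : ℝ) (hR : 0 < R) (hCap : 0 < Cap)
    (T v e z : F → ℝ) (m : F → ℕ) (s : F → ℕ → ℝ) (loc : F → ℕ → α) (n : α → ℕ)
    (hT : ∀ f, 0 < T f) (hv : ∀ f, 0 < v f)
    (he : ∀ f, 0 < e f ∧ e f ≤ 1) (hz : ∀ f, 0 ≤ z f ∧ z f ≤ 1)
    (hm : ∀ f, 1 ≤ m f)
    (hpos : ∀ f, 0 < s f 1) (hlast : ∀ f, s f (m f) < T f)
    (hmono : ∀ f j, 1 ≤ j → j < m f → s f j < s f (j + 1))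
    (hcov1 : ∀ f, 2 * s f 1 ≤ R)
    (hcov2 : ∀ f j, 1 ≤ j → j < m f → s f (j + 1) - s f j ≤ R)
    (hcov3 : ∀ f, 2 * (T f - s f (m f)) ≤ R)
    (hloc : ∀ f j, 1 ≤ j → j ≤ m f → loc f j ∈ K)
    (hcapacity : ∀ k ∈ K,
      ∑ f, ∑ j ∈ Finset.Icc 1 (m f),
        (if loc f j = k then
          ((if j = 1 then 2 * s f 1 else s f j - s f (j - 1)) +
           (if j = m f then 2 * (T f - s f (m f)) else s f (j + 1) - s f j)) *
            (v f * e f * z f)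
        else 0) ≤ Cap * (n k : ℝ)) :
    ∑ f, 2 * T f * (v f * e f * z f) ≤ Cap * ∑ k ∈ K, (n k : ℝ) :=
  aggregate_capacity_bound_general K Cap T v e z m s loc n hm hloc hcapacity
end
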